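/- For any x ∈ [0,1] not dyadic, there exist δ > 0 and δ' = 1/(2^{1-α} - 1) such that for every n ∈ ℕ there exists J ≥ n with δ·2^{J(1-α)} < |C_{J-1}(x)| < δ'·2^{J(1-α)}, where C_{J-1}(x) = Σ_{j=0}^{J-1} (-1)^{i_{j+1}(x)} 2^{(1-α)j}. -/

import Mathlib

open Real

noncomputable def digit (x : ℝ) (j : ℕ) : ℕ := (⌊(2:ℝ) ^ j * x⌋).toNat % 2

noncomputable def knoppSlope (α x : ℝ) (n : ℕ) : ℝ :=
  ∑ j ∈ Finset.range n, (-1:ℝ) ^ (digit x (j+1)) * (2:ℝ) ^ ((1-α) * (j:ℝ))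

def isDyadic (x : ℝ) : Prop := ∃ K N : ℕ, Odd K ∧ x = (K:ℝ) / 2 ^ N

/-! With `r = 2^(1-α) > 1`, `C_{J-1}(x) = ∑_{j<J} ±r^j` is a geometric sum with arbitrary signs.
It is bounded by `∑_{j<J} r^j < r^J/(r-1)`. Consecutive sums differ by `±r^n`, so one of
`|C_{n-1}|`, `|C_n|` is at least `r^n/2 ≥ r^J/(2r)`; hence `δ = 1/(4r)` works. -/

open Finset

section SignedGeomSum

variable {r : ℝ} {ε : ℕ → ℝ}

theorem abs_sum_range_mul_pow_lt (hr : 1 < r) (hε : ∀ j, |ε j| ≤ 1) (n : ℕ) :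
    |∑ j ∈ range n, ε j * r ^ j| < r ^ n / (r - 1) :=
  calc |∑ j ∈ range n, ε j * r ^ j|
      ≤ ∑ j ∈ range n, r ^ j := by
        refine (abs_sum_le_sum_abs _ _).trans (sum_le_sum fun j _ => ?_)
        rw [abs_mul, abs_of_pos (pow_pos (zero_lt_one.trans hr) j)]
        exact mul_le_of_le_one_left (by positivity) (hε j)
    _ = (r ^ n - 1) / (r - 1) := geom_sum_eq hr.ne' n
    _ < r ^ n / (r - 1) := by gcongr; linarith

theorem exists_half_pow_le_abs_sum_range_mul_pow (hr : 0 ≤ r) (hε : ∀ j, |ε j| = 1) (n : ℕ) :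
    ∃ J, n ≤ J ∧ J ≤ n + 1 ∧ r ^ n / 2 ≤ |∑ j ∈ range J, ε j * r ^ j| := by
  set S : ℕ → ℝ := fun J => ∑ j ∈ range J, ε j * r ^ j
  have hstep : r ^ n ≤ |S n| + |S (n + 1)| :=
    calc r ^ n = |S (n + 1) - S n| := by
          simp only [S, sum_range_succ, add_sub_cancel_left, abs_mul, hε, one_mul,
            abs_of_nonneg (pow_nonneg hr n)]
      _ ≤ |S (n + 1)| + |S n| := abs_sub _ _
      _ = |S n| + |S (n + 1)| := add_comm _ _
  by_cases hn : r ^ n / 2 ≤ |S n|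
  · exact ⟨n, le_rfl, n.le_succ, hn⟩
  · exact ⟨n + 1, n.le_succ, le_rfl, by linarith⟩

end SignedGeomSum

theorem knoppSlope_eq_sum_mul_pow (α x : ℝ) (n : ℕ) :
    knoppSlope α x n = ∑ j ∈ range n, (-1:ℝ) ^ (digit x (j+1)) * ((2:ℝ) ^ (1-α)) ^ j := by
  simp only [knoppSlope, rpow_mul_natCast zero_le_two]

theorem slope_bounds_general (α : ℝ) (hα1 : α < 1)
    (x : ℝ) :
    ∃ δ > 0, ∀ n : ℕ, ∃ J : ℕ, n ≤ J ∧
      δ * (2:ℝ) ^ ((J:ℝ) * (1-α)) < |knoppSlope α x J| ∧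
      |knoppSlope α x J| < (1 / ((2:ℝ) ^ (1-α) - 1)) * (2:ℝ) ^ ((J:ℝ) * (1-α)) := by
  set r : ℝ := (2:ℝ) ^ (1-α)
  have hr : 1 < r := one_lt_rpow one_lt_two (by linarith)
  have hpow (J : ℕ) : (2:ℝ) ^ ((J:ℝ) * (1-α)) = r ^ J := by
    rw [mul_comm, rpow_mul_natCast zero_le_two]
  have hsign (j : ℕ) : |(-1:ℝ) ^ (digit x (j+1))| = 1 := by simp
  refine ⟨1 / (4 * r), by positivity, fun n => ?_⟩
  obtain ⟨J, hnJ, hJn, hlow⟩ :=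
    exists_half_pow_le_abs_sum_range_mul_pow (by linarith) hsign n
  refine ⟨J, hnJ, ?_, ?_⟩ <;> rw [hpow, knoppSlope_eq_sum_mul_pow]
  · calc 1 / (4 * r) * r ^ J ≤ 1 / (4 * r) * r ^ (n + 1) := by
          exact mul_le_mul_of_nonneg_left (pow_le_pow_right₀ hr.le hJn) (by positivity)
      _ = r ^ n / 4 := by rw [pow_succ]; field_simp
      _ < r ^ n / 2 := by linarith [pow_pos (zero_lt_one.trans hr) n]
      _ ≤ _ := hlow
  · rw [one_div_mul_eq_div]
    exact abs_sum_range_mul_pow_lt hr (fun j => (hsign j).le) J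

theorem slope_bounds (α : ℝ) (hα : 0 < α) (hα1 : α < 1)
    (x : ℝ) (hx : x ∈ Set.Icc (0:ℝ) 1) (hnd : ¬ isDyadic x) :
    ∃ δ > 0, ∀ n : ℕ, ∃ J : ℕ, n ≤ J ∧
      δ * (2:ℝ) ^ ((J:ℝ) * (1-α)) < |knoppSlope α x J| ∧
      |knoppSlope α x J| < (1 / ((2:ℝ) ^ (1-α) - 1)) * (2:ℝ) ^ ((J:ℝ) * (1-α)) :=
  slope_bounds_general α hα1 x
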